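/- The set product C(π/2)C(π/2) equals all of SU(2); that is, every element of SU(2) is a product of two matrices each conjugate in SU(2) to diag(i, −i). -/

import Mathlib

open Matrix Complex Pointwise

/-- `SU(2)`: the subgroup of the unitary group `U(2)` (2×2 complex unitary matrices)
consisting of the matrices of determinant 1. -/
noncomputable def SU2 : Subgroup (Matrix.unitaryGroup (Fin 2) ℂ) :=
  MonoidHom.ker (Matrix.detMonoidHom.comp (Submonoid.subtype _))

theorem mem_SU2_iff (A : Matrix.unitaryGroup (Fin 2) ℂ) :
    A ∈ SU2 ↔ Matrix.det (A : Matrix (Fin 2) (Fin 2) ℂ) = 1 := Iff.rfl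

/-- The diagonal matrix `diag(e^{iλ}, e^{-iλ})` as an element of `SU(2)`. -/
noncomputable def su2diag (l : ℝ) : SU2 :=
  ⟨⟨Matrix.diagonal ![Complex.exp (l * Complex.I), Complex.exp (-(l * Complex.I))], by
    rw [Matrix.mem_unitaryGroup_iff]
    rw [Matrix.star_eq_conjTranspose, Matrix.diagonal_conjTranspose,
      Matrix.diagonal_mul_diagonal]
    have h : (fun i => ![Complex.exp (l * Complex.I), Complex.exp (-(l * Complex.I))] i *
        star ![Complex.exp (l * Complex.I), Complex.exp (-(l * Complex.I))] i)
        = (1 : Fin 2 → ℂ) := by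
      funext i
      fin_cases i <;>
        simp [Pi.star_apply, ← Complex.exp_conj, ← Complex.exp_add]
    rw [h]; exact Matrix.diagonal_one⟩, by
    rw [mem_SU2_iff]
    rw [Matrix.det_diagonal]
    simp [Fin.prod_univ_two, ← Complex.exp_add]⟩

/-- The conjugacy class `C(λ)` of `diag(e^{iλ}, e^{-iλ})` in `SU(2)`. -/
noncomputable def conjClass (l : ℝ) : Set SU2 :=
  { g | ∃ h : SU2, h * su2diag l * h⁻¹ = g }

/-- The pointwise set product `C(λ₁)⋯C(λ_m)` of the conjugacy classes
`C(λ₁), …, C(λ_m)` in `SU(2)`. -/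
noncomputable def classProd {m : ℕ} (l : Fin m → ℝ) : Set SU2 :=
  (List.ofFn fun i => conjClass (l i)).prod

/-! An element of `SU(2)` of trace zero squares to `-1`, and so does `D = diag(i, -i)`. Hence
`(1 - gD) D = D + g = g (1 - gD)` for every traceless `g`, and `1 - gD`, rescaled into `SU(2)`,
conjugates `D` to `g`; when `gD = 1` the Weyl element `!![0, 1; -1, 0]` does it instead. So `C(π/2)`
contains every traceless element. Given `g = !![a, b; -b̄, ā]`, the traceless
`A = !![0, y; -ȳ, 0]` with `y b̄ ∈ iℝ` makes `A⁻¹ g` traceless too, and `g = A (A⁻¹ g)`. -/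

open ComplexConjugate

theorem mul_conj_add_mul_conj_eq_one {a b : ℂ} (h : normSq a + normSq b = 1) :
    a * conj a + b * conj b = 1 := by
  simp only [mul_conj]
  exact_mod_cast h

theorem star_fin_two_of {α : Type*} [Star α] (a b c d : α) :
    star !![a, b; c, d] = !![star a, star c; star b, star d] := by
  ext i j; fin_cases i <;> fin_cases j <;> rfl

theorem det_fin_two_of_neg_conj (a b : ℂ) :
    det !![a, b; -conj b, conj a] = (normSq a + normSq b : ℝ) := by
  rw [det_fin_two_of, ofReal_add, ← mul_conj, ← mul_conj]
  ring

namespace SU2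

noncomputable def toMatrix : SU2 →* Matrix (Fin 2) (Fin 2) ℂ :=
  (unitaryGroup (Fin 2) ℂ).subtype.comp (Subgroup.subtype SU2)

theorem toMatrix_injective : Function.Injective toMatrix :=
  fun _ _ h => Subtype.ext (Subtype.ext h)

theorem toMatrix_inv (g : SU2) : toMatrix g⁻¹ = star (toMatrix g) := rfl

theorem toMatrix_su2diag (l : ℝ) :
    toMatrix (su2diag l) = !![exp (l * I), 0; 0, exp (-(l * I))] := by
  ext i j; fin_cases i <;> fin_cases j <;> rfl

noncomputable def mk (a b : ℂ) (h : normSq a + normSq b = 1) : SU2 :=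
  ⟨⟨!![a, b; -conj b, conj a], by
    rw [mem_unitaryGroup_iff]
    ext i j
    fin_cases i <;> fin_cases j <;> simp [mul_apply, Fin.sum_univ_two, star_apply, mul_comm] <;>
      linear_combination mul_conj_add_mul_conj_eq_one h⟩, by
    rw [mem_SU2_iff]
    exact (det_fin_two_of_neg_conj a b).trans (by exact_mod_cast h)⟩

theorem toMatrix_mk (a b : ℂ) (h : normSq a + normSq b = 1) :
    toMatrix (mk a b h) = !![a, b; -conj b, conj a] := rfl

theorem exists_eq_mk (g : SU2) : ∃ a b h, g = mk a b h := by
  set M := toMatrix g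
  have hdet : M.det = 1 := g.2
  have hstar : star M = M.adjugate := by
    have hunit : star M * M = 1 := mem_unitaryGroup_iff'.mp g.1.2
    rw [← inv_eq_left_inv hunit, Matrix.inv_def, hdet]
    simp
  have h11 : M 1 1 = conj (M 0 0) := by
    simpa [star_apply, adjugate_fin_two] using (congrFun (congrFun hstar 0) 0).symm
  have h10 : M 1 0 = -conj (M 0 1) := by
    have := congrFun (congrFun hstar 1) 0
    simp only [star_apply, RCLike.star_def, adjugate_fin_two, of_apply, cons_val', cons_val_zero,
      cons_val_fin_one, cons_val_one] at this
    linear_combination this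
  have hM : M = !![M 0 0, M 0 1; -conj (M 0 1), conj (M 0 0)] := by
    rw [← h11, ← h10]; exact eta_fin_two M
  refine ⟨M 0 0, M 0 1, ?_, toMatrix_injective hM⟩
  rw [hM, det_fin_two_of_neg_conj] at hdet
  exact_mod_cast hdet

theorem su2diag_halfPi : su2diag (Real.pi / 2) = mk I 0 (by simp) := by
  apply toMatrix_injective
  rw [toMatrix_su2diag, toMatrix_mk, exp_neg, ofReal_div, ofReal_ofNat, exp_pi_div_two_mul_I]
  simp

theorem toMatrix_mul_self_of_trace_eq_zero (g : SU2) (hg : trace (toMatrix g) = 0) :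
    toMatrix g * toMatrix g = -1 := by
  obtain ⟨a, b, hab, rfl⟩ := exists_eq_mk g
  rw [toMatrix_mk, trace_fin_two_of] at hg
  have hab' := mul_conj_add_mul_conj_eq_one hab
  rw [toMatrix_mk]
  ext i j
  fin_cases i <;> fin_cases j <;> simp [mul_apply, Fin.sum_univ_two]
  · linear_combination a * hg - hab'
  · linear_combination b * hg
  · linear_combination -conj b * hg
  · linear_combination conj a * hg - hab'

theorem inv_su2diag_mem_conjClass (l : ℝ) : (su2diag l)⁻¹ ∈ conjClass l := by
  refine ⟨mk 0 1 (by simp), ?_⟩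
  apply toMatrix_injective
  simp only [map_mul, toMatrix_inv, toMatrix_mk, toMatrix_su2diag]
  ext i j
  fin_cases i <;> fin_cases j <;> simp [mul_apply, Fin.sum_univ_two, star_apply, ← exp_conj]

theorem re_lt_one_of_mk_ne_one {a b : ℂ} (h : normSq a + normSq b = 1) (hne : mk a b h ≠ 1) :
    a.re < 1 := by
  refine lt_of_le_of_ne ?_ fun hre => hne (toMatrix_injective ?_)
  · nlinarith [normSq_apply a, normSq_nonneg b, sq_nonneg a.im]
  · have him : a.im = 0 := by nlinarith [normSq_apply a, normSq_nonneg b, sq_nonneg a.im]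
    have hb : b = 0 := by
      rw [← normSq_eq_zero]; nlinarith [normSq_apply a, normSq_nonneg b]
    have ha : a = 1 := ext hre him
    rw [toMatrix_mk, map_one, one_fin_two, ha, hb]
    simp

theorem exists_toMatrix_eq_smul_one_sub (X : SU2) (hX : X ≠ 1) :
    ∃ (h : SU2) (c : ℂ), toMatrix h = c • (1 - toMatrix X) := by
  obtain ⟨a, b, hab, rfl⟩ := exists_eq_mk X
  have hre := re_lt_one_of_mk_ne_one hab hX
  -- `normSq (1 - a) + normSq b = 2 - 2 * a.re`, so `n` normalises `1 - X` into `SU(2)`.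
  set n := √(2 - 2 * a.re)
  have hn : n * n = 2 - 2 * a.re := Real.mul_self_sqrt (by linarith)
  have hnorm : normSq ((1 - a) / n) + normSq (-b / n) = 1 := by
    rw [normSq_div, normSq_div, normSq_neg, normSq_ofReal, hn, normSq_sub, ← add_div,
      div_eq_one_iff_eq (by linarith)]
    simp only [normSq_one, one_mul, conj_re]
    linarith
  refine ⟨mk _ _ hnorm, (n : ℂ)⁻¹, ?_⟩
  rw [toMatrix_mk, toMatrix_mk, one_fin_two]
  ext i j
  fin_cases i <;> fin_cases j <;> simp [map_div₀] <;> ring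

theorem mem_conjClass_halfPi_of_trace_eq_zero (g : SU2) (hg : trace (toMatrix g) = 0) :
    g ∈ conjClass (Real.pi / 2) := by
  set D := su2diag (Real.pi / 2)
  by_cases hgD : g * D = 1
  · rw [eq_inv_of_mul_eq_one_left hgD]
    exact inv_su2diag_mem_conjClass _
  obtain ⟨h, c, hh⟩ := exists_toMatrix_eq_smul_one_sub _ hgD
  have hg2 := toMatrix_mul_self_of_trace_eq_zero g hg
  have hD2 : toMatrix D * toMatrix D = -1 :=
    toMatrix_mul_self_of_trace_eq_zero D (by simp [D, su2diag_halfPi, toMatrix_mk])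
  refine ⟨h, mul_inv_eq_of_eq_mul (toMatrix_injective ?_)⟩
  rw [map_mul, map_mul, hh, map_mul, smul_mul_assoc, mul_smul_comm]
  congr 1
  calc (1 - toMatrix g * toMatrix D) * toMatrix D
      = toMatrix D - toMatrix g * (toMatrix D * toMatrix D) := by noncomm_ring
    _ = toMatrix g - toMatrix g * toMatrix g * toMatrix D := by rw [hD2, hg2]; noncomm_ring
    _ = toMatrix g * (1 - toMatrix g * toMatrix D) := by noncomm_ring

theorem exists_trace_eq_zero_and_trace_inv_mul_eq_zero (g : SU2) :
    ∃ A : SU2, trace (toMatrix A) = 0 ∧ trace (toMatrix (A⁻¹ * g)) = 0 := by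
  obtain ⟨a, b, hab, rfl⟩ := exists_eq_mk g
  set u := exp (arg b * I)
  have hu : normSq 0 + normSq (I * u) = 1 := by
    simp [u, normSq_eq_norm_sq, norm_exp_ofReal_mul_I]
  refine ⟨mk 0 (I * u) hu, by simp [toMatrix_mk, trace_fin_two_of], ?_⟩
  have hb : b = ‖b‖ * u := (norm_mul_exp_arg_mul_I b).symm
  rw [map_mul, toMatrix_inv, toMatrix_mk, toMatrix_mk, star_fin_two_of, mul_fin_two,
    trace_fin_two_of, hb]
  simp only [star_def, map_mul, map_neg, map_zero, conj_conj, conj_ofReal, conj_I]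
  ring

end SU2

/-- `C(π/2)C(π/2) = SU(2)`: every element of `SU(2)` is a product of two
matrices each conjugate in `SU(2)` to `diag(i, −i)`. -/
theorem halfPi_mul_halfPi_eq_univ :
    conjClass (Real.pi / 2) * conjClass (Real.pi / 2) = Set.univ := by
  refine Set.eq_univ_of_forall fun g => ?_
  obtain ⟨A, hA, hAg⟩ := SU2.exists_trace_eq_zero_and_trace_inv_mul_eq_zero g
  exact ⟨A, SU2.mem_conjClass_halfPi_of_trace_eq_zero A hA, A⁻¹ * g,
    SU2.mem_conjClass_halfPi_of_trace_eq_zero _ hAg, mul_inv_cancel_left A g⟩
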